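/- The commutator subgroup GVB_3' = [GVB_3, GVB_3] of the generalized virtual braid group GVB_3 is not finitely generated as a subgroup of GVB_3. -/

import Mathlib

namespace GenVirtBraid

/-- The free-group generator word for `σ_{i+1}` (0-indexed `i`). -/
def σw (n : ℕ) (i : Fin (n-1)) : FreeGroup (Fin (n-1) ⊕ Fin (n-1)) := FreeGroup.of (Sum.inl i)

/-- The free-group generator word for `ρ_{i+1}` (0-indexed `i`). -/
def ρw (n : ℕ) (i : Fin (n-1)) : FreeGroup (Fin (n-1) ⊕ Fin (n-1)) := FreeGroup.of (Sum.inr i)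

/-- Defining relators of the generalized virtual braid group `GVB_n`. -/
def gvbRels (n : ℕ) : Set (FreeGroup (Fin (n-1) ⊕ Fin (n-1))) :=
  {r | ∃ i j : Fin (n-1), ((i:ℕ)+1 < (j:ℕ) ∨ (j:ℕ)+1 < (i:ℕ)) ∧
      r = σw n i * σw n j * (σw n i)⁻¹ * (σw n j)⁻¹} ∪
  {r | ∃ i j : Fin (n-1), (j:ℕ) = (i:ℕ)+1 ∧
      r = σw n i * σw n j * σw n i * (σw n j * σw n i * σw n j)⁻¹} ∪
  {r | ∃ i j : Fin (n-1), ((i:ℕ)+1 < (j:ℕ) ∨ (j:ℕ)+1 < (i:ℕ)) ∧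
      r = ρw n i * ρw n j * (ρw n i)⁻¹ * (ρw n j)⁻¹} ∪
  {r | ∃ i j : Fin (n-1), (j:ℕ) = (i:ℕ)+1 ∧
      r = ρw n i * ρw n j * ρw n i * (ρw n j * ρw n i * ρw n j)⁻¹} ∪
  {r | ∃ i j : Fin (n-1), (j:ℕ) = (i:ℕ)+1 ∧
      r = ρw n i * σw n j * σw n i * (σw n j * σw n i * ρw n j)⁻¹} ∪
  {r | ∃ i j : Fin (n-1), (j:ℕ) = (i:ℕ)+1 ∧
      r = ρw n j * σw n i * σw n j * (σw n i * σw n j * ρw n i)⁻¹} ∪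
  {r | ∃ i j : Fin (n-1), ((i:ℕ)+1 < (j:ℕ) ∨ (j:ℕ)+1 < (i:ℕ)) ∧
      r = σw n i * ρw n j * (σw n i)⁻¹ * (ρw n j)⁻¹}

/-- The generalized virtual braid group `GVB_n` (Fang's presentation). -/
abbrev GVB (n : ℕ) := PresentedGroup (gvbRels n)

/-- The generator `σ_{i+1}` of `GVB_n` (0-indexed `i`). -/
def σ (n : ℕ) (i : Fin (n-1)) : GVB n := PresentedGroup.of (Sum.inl i)

/-- The generator `ρ_{i+1}` of `GVB_n` (0-indexed `i`). -/
def ρ (n : ℕ) (i : Fin (n-1)) : GVB n := PresentedGroup.of (Sum.inr i)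

end GenVirtBraid

/-!
Send every `σ_i` to the lamp `a` at the origin and every `ρ_i` to the shift `t` of the
lamplighter group `ℤ/2 ≀ ℤ`: the only relations that do not become trivial say that `t`
commutes with `a²`, which holds because `a² = 1`. As `ℤ` is abelian, the image of `GVB_3'` lies
in the kernel of the projection onto `ℤ`, the lamp group `⨁_ℤ ℤ/2`, which is abelian and
torsion, so a finitely generated subgroup of it is finite. But the image contains the infinitely
many commutators `⁅t^m, a⁆ = a_m a_0`, where `a_m` is the lamp at `m`.
-/

open scoped commutatorElement IsMulCommutative

theorem Subgroup.FG.map {G G' : Type*} [Group G] [Group G'] {H : Subgroup G} (hH : H.FG)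
    (f : G →* G') : (H.map f).FG := by
  classical
  obtain ⟨S, rfl⟩ := hH
  exact ⟨S.image f, by rw [Finset.coe_image, MonoidHom.map_closure]⟩

theorem Subgroup.FG.finite_of_le_range {N G : Type*} [CommGroup N] [Group G] {f : N →* G}
    (hN : IsMulTorsion N) {H : Subgroup G} (hH : H.FG) (hle : H ≤ f.range) : Finite H := by
  have : IsMulCommutative H :=
    .of_setLike_mul_comm fun _ ha _ hb ↦ setLike_mul_comm (hle ha) (hle hb)
  have : Group.FG H := (Group.fg_iff_subgroup_fg H).mpr hH
  refine CommGroup.finite_of_fg_isMulTorsion H fun h ↦ ?_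
  obtain ⟨n, hn⟩ := hle h.2
  exact Submonoid.isOfFinOrder_coe.mp (hn ▸ f.isOfFinOrder (hN n))

namespace SemidirectProduct

variable {N G : Type*} [Group N]

theorem map_commutator_le_range_inl {H : Type*} [CommGroup G] [Group H] {φ : G →* MulAut N}
    (f : H →* N ⋊[φ] G) : (commutator H).map f ≤ (inl : N →* N ⋊[φ] G).range := by
  rw [range_inl_eq_ker_rightHom, Subgroup.map_le_iff_le_comap, MonoidHom.comap_ker]
  exact Abelianization.commutator_subset_ker _

theorem commutatorElement_inr_inl [Group G] {φ : G →* MulAut N} (g : G) (n : N) :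
    ⁅(inr g : N ⋊[φ] G), (inl n : N ⋊[φ] G)⁆ = inl (φ g n * n⁻¹) := by
  rw [commutatorElement_def, map_mul, inl_aut, map_inv, map_inv]

end SemidirectProduct

noncomputable section

namespace Lamplighter

open Finsupp

abbrev Lamps : Type := Multiplicative (ℤ →₀ ZMod 2)

def lamp (k : ℤ) : Lamps := .ofAdd (single k 1)

theorem lamp_injective : Function.Injective lamp := fun _ _ h ↦
  single_left_injective one_ne_zero (Multiplicative.ofAdd.injective h)

theorem Lamps.sq_eq_one (x : Lamps) : x ^ 2 = 1 := by
  show Multiplicative.ofAdd (2 • x.toAdd) = Multiplicative.ofAdd 0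
  rw [← Nat.cast_smul_eq_nsmul (ZMod 2), show ((2 : ℕ) : ZMod 2) = 0 from rfl, zero_smul]

theorem Lamps.isMulTorsion : IsMulTorsion Lamps := fun x ↦
  isOfFinOrder_iff_pow_eq_one.mpr ⟨2, two_pos, x.sq_eq_one⟩

def shift : Multiplicative ℤ →* MulAut Lamps where
  toFun m := AddEquiv.toMultiplicative (Finsupp.domCongr (Equiv.addRight m.toAdd))
  map_one' := by ext x k; simp [Equiv.addRight]
  map_mul' m m' := by ext x k; simp [Equiv.addRight, add_assoc, add_comm]

theorem shift_lamp (m k : ℤ) : shift (.ofAdd m) (lamp k) = lamp (k + m) := by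
  simp [shift, lamp]

end Lamplighter

open Lamplighter SemidirectProduct

abbrev Lamplighter : Type := Lamps ⋊[shift] Multiplicative ℤ

theorem Lamplighter.inl_lamp_mul_self (k : ℤ) :
    (inl (lamp k) : Lamplighter) * inl (lamp k) = 1 := by
  rw [← map_mul, ← sq, Lamps.sq_eq_one, map_one]

namespace GenVirtBraid

def lamplighterGen : Fin (3 - 1) ⊕ Fin (3 - 1) → Lamplighter :=
  Sum.elim (fun _ ↦ inl (lamp 0)) (fun _ ↦ inr (.ofAdd 1))

theorem lift_lamplighterGen_eq_one : ∀ r ∈ gvbRels 3, FreeGroup.lift lamplighterGen r = 1 := by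
  rintro r ((((((⟨i, j, hij, rfl⟩ | ⟨i, j, -, rfl⟩) | ⟨i, j, hij, rfl⟩) | ⟨i, j, -, rfl⟩) |
    ⟨i, j, -, rfl⟩) | ⟨i, j, -, rfl⟩) | ⟨i, j, hij, rfl⟩)
  all_goals simp only [σw, ρw, map_mul, map_inv, FreeGroup.lift_apply_of, lamplighterGen,
    Sum.elim_inl, Sum.elim_inr, mul_inv_eq_one, mul_inv_cancel]
  -- for `n = 3` no two indices are more than one apart
  all_goals first
    | (have := i.is_lt; have := j.is_lt; omega)
    | rw [mul_assoc, inl_lamp_mul_self, mul_one, one_mul]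

def toLamplighter : GVB 3 →* Lamplighter := PresentedGroup.toGroup lift_lamplighterGen_eq_one

theorem toLamplighter_σ (i : Fin (3 - 1)) : toLamplighter (σ 3 i) = inl (lamp 0) :=
  PresentedGroup.toGroup.of _

theorem toLamplighter_ρ (i : Fin (3 - 1)) : toLamplighter (ρ 3 i) = inr (.ofAdd 1) :=
  PresentedGroup.toGroup.of _

theorem infinite_map_commutator_toLamplighter :
    Infinite ((commutator (GVB 3)).map toLamplighter) := by
  have ha : inl (lamp 0) ∈ toLamplighter.range := ⟨σ 3 0, toLamplighter_σ 0⟩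
  have ht (m : ℤ) : inr (.ofAdd m) ∈ toLamplighter.range := by
    have ht₁ : inr (.ofAdd 1) ∈ toLamplighter.range := ⟨ρ 3 0, toLamplighter_ρ 0⟩
    simpa [← map_zpow, ← ofAdd_zsmul] using zpow_mem ht₁ m
  have hmem (m : ℤ) :
      inl (lamp m * (lamp 0)⁻¹) ∈ (commutator (GVB 3)).map toLamplighter := by
    rw [map_commutator_eq, ← zero_add m, ← shift_lamp, ← commutatorElement_inr_inl]
    exact Subgroup.commutator_mem_commutator (ht m) ha
  refine (Set.infinite_of_injective_forall_mem (fun m m' h ↦ ?_) hmem).to_subtype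
  exact lamp_injective (mul_right_cancel (inl_injective h))

end GenVirtBraid

end

open GenVirtBraid in
/-- The commutator subgroup of the generalized virtual braid group `GVB_3` is not
finitely generated. -/
theorem gvb3_commutator_not_fg : ¬ (commutator (GVB 3)).FG := by
  intro hfg
  have := infinite_map_commutator_toLamplighter
  have := (hfg.map toLamplighter).finite_of_le_range Lamplighter.Lamps.isMulTorsion
    (SemidirectProduct.map_commutator_le_range_inl toLamplighter)
  exact not_finite ((commutator (GVB 3)).map toLamplighter)
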